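/- arXiv:1710.02753 — 4 statements merged into one kernel-verified Lean document; each statement's English description precedes it below -/
import Mathlib

section
/- The subgroup of Isom(ℝ³) generated by the translation t: (x,y,z) ↦ (x, y, z+b) and the glide rotation σ: (x,y,z) ↦ (−x, y + a/2, −z) (for a, b > 0) acts freely and properly discontinuously on ℝ³, and every element of this group is orientation-preserving. -/
noncomputable section

/-- Euclidean space `E^n`. -/
abbrev E (n : ℕ) : Type := EuclideanSpace ℝ (Fin n)

/-- Discreteness of a group of isometries, expressed as proper discontinuity of its action. -/
def IsDiscreteGrp {n : ℕ} (Γ : Subgroup (E n ≃ᵢ E n)) : Prop :=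
  ∀ K : Set (E n), IsCompact K →
    {γ : E n ≃ᵢ E n | γ ∈ Γ ∧ ((γ '' K) ∩ K).Nonempty}.Finite

/-- Cocompactness of a group of isometries of `E^n`. -/
def IsCocompactGrp {n : ℕ} (Γ : Subgroup (E n ≃ᵢ E n)) : Prop :=
  ∃ K : Set (E n), IsCompact K ∧ ∀ x : E n, ∃ γ ∈ Γ, γ x ∈ K

/-- The action of `Γ` on `E^n` is free. -/
def ActsFreely {n : ℕ} (Γ : Subgroup (E n ≃ᵢ E n)) : Prop :=
  ∀ γ ∈ Γ, (∃ x : E n, γ x = x) → γ = 1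

/-- A crystallographic group: discrete and cocompact. -/
def IsCrystallographic {n : ℕ} (Γ : Subgroup (E n ≃ᵢ E n)) : Prop :=
  IsDiscreteGrp Γ ∧ IsCocompactGrp Γ

/-- A Bieberbach group: discrete, cocompact, acting freely. -/
def IsBieberbach {n : ℕ} (Γ : Subgroup (E n ≃ᵢ E n)) : Prop :=
  IsDiscreteGrp Γ ∧ IsCocompactGrp Γ ∧ ActsFreely Γ

/-- `f` is a translation. -/
def IsTranslation {n : ℕ} (f : E n ≃ᵢ E n) : Prop :=
  ∃ a : E n, ∀ x : E n, f x = x + a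

/-- The linear isometry `(x,y,z) ↦ (-x, y, -z)`, as a linear map. -/
def flipLM : E 3 →ₗ[ℝ] E 3 where
  toFun x := WithLp.toLp 2 ![-(x 0), x 1, -(x 2)]
  map_add' x y := by ext i; fin_cases i <;> simp <;> ring
  map_smul' c x := by ext i; fin_cases i <;> simp [smul_eq_mul]

/-- The linear isometry `(x,y,z) ↦ (-x, y, -z)`. -/
def negFlip : E 3 ≃ₗᵢ[ℝ] E 3 :=
  { LinearEquiv.ofInvolutive flipLM (by intro x; ext i; fin_cases i <;> simp [flipLM]) with
    norm_map' := by
      intro x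
      rw [EuclideanSpace.norm_eq, EuclideanSpace.norm_eq]
      congr 1
      rw [Fin.sum_univ_three, Fin.sum_univ_three]
      simp [flipLM, LinearEquiv.ofInvolutive] }

theorem negFlip_apply (x : E 3) : negFlip x = WithLp.toLp 2 ![-(x 0), x 1, -(x 2)] := rfl

theorem negFlip_det : LinearMap.det (negFlip.toLinearEquiv : E 3 →ₗ[ℝ] E 3) = 1 := by
  rw [← LinearMap.det_toMatrix ((EuclideanSpace.basisFun (Fin 3) ℝ).toBasis),
    Matrix.det_fin_three]
  simp only [LinearMap.toMatrix_apply, OrthonormalBasis.coe_toBasis,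
    OrthonormalBasis.coe_toBasis_repr_apply, EuclideanSpace.basisFun_repr,
    EuclideanSpace.basisFun_apply]
  norm_num [negFlip_apply, EuclideanSpace.single_apply]
  norm_num [Fin.ext_iff]
  simp [Matrix.cons_val]

theorem coord_le_norm (v : E 3) (i : Fin 3) : |v i| ≤ ‖v‖ := by
  rw [EuclideanSpace.norm_eq]
  refine le_trans ?_ (Real.sqrt_le_sqrt
    (Finset.single_le_sum (f := fun j => ‖v j‖ ^ 2) (fun j _ => sq_nonneg _)
      (Finset.mem_univ i)))
  rw [Real.sqrt_sq_eq_abs, Real.norm_eq_abs, abs_abs]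

/-- the subgroup of `Isom(ℝ³)` generated by the translation
`t : (x,y,z) ↦ (x, y, z + b)` and the glide rotation `σ : (x,y,z) ↦ (-x, y + a/2, -z)`
acts freely and properly discontinuously on `ℝ³`, and every element of this group is
orientation-preserving (its linear part has determinant `+1`). -/
theorem TK_group_free_orientable (a b : ℝ) (ha : 0 < a) (hb : 0 < b)
    (t σ : E 3 ≃ᵢ E 3)
    (ht : ∀ x : E 3, t x = ![x 0, x 1, x 2 + b])
    (hσ : ∀ x : E 3, σ x = ![-(x 0), x 1 + a / 2, -(x 2)]) :
    ActsFreely (Subgroup.closure {t, σ}) ∧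
    IsDiscreteGrp (Subgroup.closure {t, σ}) ∧
    (∀ γ ∈ Subgroup.closure {t, σ}, ∃ A : E 3 ≃ₗᵢ[ℝ] E 3,
      (∀ x : E 3, γ x = A x + γ 0) ∧
      LinearMap.det (A.toLinearEquiv : E 3 →ₗ[ℝ] E 3) = 1) := by
  have hne : (-1 : ℝ) ≠ 0 := by norm_num
  have hsq : ∀ m : ℤ, (-1 : ℝ) ^ m * (-1 : ℝ) ^ m = 1 := by
    intro m
    rw [← zpow_add₀ hne, ← two_mul, zpow_mul]
    norm_num
  have hnegp : ∀ m : ℤ, (-1 : ℝ) ^ (-m) = (-1 : ℝ) ^ m := by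
    intro m
    rw [zpow_neg]
    exact inv_eq_of_mul_eq_one_right (hsq m)
  -- the normal form of every element of the group
  have hmem : ∀ γ ∈ Subgroup.closure {t, σ}, ∃ n m : ℤ, ∀ x : E 3,
      γ x = ![(-1 : ℝ) ^ m * x 0, x 1 + m * (a / 2), (-1 : ℝ) ^ m * x 2 + n * b] := by
    intro γ hγ
    induction hγ using Subgroup.closure_induction with
    | mem g hg =>
      rcases hg with rfl | rfl
      · exact ⟨1, 0, fun x => by rw [ht]; funext i; fin_cases i <;> simp⟩
      · exact ⟨0, 1, fun x => by rw [hσ]; funext i; fin_cases i <;> simp <;> ring⟩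
    | one => exact ⟨0, 0, fun x => by funext i; fin_cases i <;> simp⟩
    | mul g₁ g₂ h₁ h₂ ih₁ ih₂ =>
      obtain ⟨n₁, m₁, f₁⟩ := ih₁
      obtain ⟨n₂, m₂, f₂⟩ := ih₂
      have hz : (-1 : ℝ) ^ (m₁ + m₂) = (-1 : ℝ) ^ m₁ * (-1 : ℝ) ^ m₂ := zpow_add₀ hne _ _
      rcases Int.even_or_odd m₁ with he | ho
      · refine ⟨n₁ + n₂, m₁ + m₂, fun x => ?_⟩
        rw [IsometryEquiv.mul_apply, f₁, f₂]
        funext i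
        fin_cases i <;> simp [hz, he.neg_one_zpow] <;> push_cast <;> ring
      · refine ⟨n₁ - n₂, m₁ + m₂, fun x => ?_⟩
        rw [IsometryEquiv.mul_apply, f₁, f₂]
        funext i
        fin_cases i <;> simp [hz, ho.neg_one_zpow] <;> push_cast <;> ring
    | inv g hg ih =>
      obtain ⟨n, m, f⟩ := ih
      rcases Int.even_or_odd m with he | ho
      · refine ⟨-n, -m, fun x => ?_⟩
        apply WithLp.toLp_injective 2; rw [WithLp.toLp_ofLp]
        apply g.injective
        have hg1 : g (g⁻¹ x) = x := by
          rw [← IsometryEquiv.mul_apply, mul_inv_cancel]; rfl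
        rw [hg1]; apply WithLp.ofLp_injective; rw [f]
        funext i
        fin_cases i <;> simp [he.neg_one_zpow, he.neg.neg_one_zpow] <;> push_cast <;> ring
      · refine ⟨n, -m, fun x => ?_⟩
        apply WithLp.toLp_injective 2; rw [WithLp.toLp_ofLp]
        apply g.injective
        have hg1 : g (g⁻¹ x) = x := by
          rw [← IsometryEquiv.mul_apply, mul_inv_cancel]; rfl
        rw [hg1]; apply WithLp.ofLp_injective; rw [f]
        funext i
        fin_cases i <;> simp [ho.neg_one_zpow, ho.neg.neg_one_zpow] <;> push_cast <;> ring
  refine ⟨?_, ?_, ?_⟩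
  · -- acts freely
    rintro γ hγ ⟨x, hx⟩
    obtain ⟨n, m, f⟩ := hmem γ hγ
    have e : (![(-1 : ℝ) ^ m * x 0, x 1 + m * (a / 2), (-1 : ℝ) ^ m * x 2 + n * b] : Fin 3 → ℝ)
        = x := (f x).symm.trans (congrArg WithLp.ofLp hx)
    have e1 : x 1 + (m : ℝ) * (a / 2) = x 1 := by simpa using congrFun e 1
    have hm : m = 0 := by
      have : (m : ℝ) * (a / 2) = 0 := by linarith
      rcases mul_eq_zero.1 this with h | h
      · exact_mod_cast h
      · exfalso; linarith
    subst hm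
    have e2 : x 2 + (n : ℝ) * b = x 2 := by simpa using congrFun e 2
    have hn : n = 0 := by
      have : (n : ℝ) * b = 0 := by linarith
      rcases mul_eq_zero.1 this with h | h
      · exact_mod_cast h
      · exfalso; linarith
    subst hn
    refine IsometryEquiv.ext fun v => ?_
    apply WithLp.ofLp_injective
    rw [f v]
    funext i
    fin_cases i <;> simp
  · -- discrete
    intro K hK
    obtain ⟨R₀, hR₀⟩ := hK.isBounded.subset_closedBall 0
    set R := max R₀ 0 with hRdef
    have hR : ∀ y ∈ K, ‖y‖ ≤ R := by
      intro y hy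
      have := hR₀ hy
      rw [Metric.mem_closedBall, dist_zero_right] at this
      exact this.trans (le_max_left _ _)
    have hR0 : (0 : ℝ) ≤ R := le_max_right _ _
    set M : ℤ := ⌈4 * R / a⌉ with hM
    set N : ℤ := ⌈2 * R / b⌉ with hN
    refine Set.Finite.of_finite_image (f := fun γ : E 3 ≃ᵢ E 3 => ((γ 0 : E 3) 1, (γ 0 : E 3) 2)) ?_ ?_
    · refine Set.Finite.subset
        (((Finset.Icc (-M) M ×ˢ Finset.Icc (-N) N).finite_toSet).image
          (fun p : ℤ × ℤ => ((p.1 : ℝ) * (a / 2), (p.2 : ℝ) * b))) ?_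
      rintro p ⟨γ, ⟨hγΓ, z, ⟨y, hyK, rfl⟩, hzK⟩, rfl⟩
      obtain ⟨n, m, f⟩ := hmem γ hγΓ
      have h0 : (γ 0 : E 3) 1 = (m : ℝ) * (a / 2) := by
        rw [f 0]; simp
      have h02 : (γ 0 : E 3) 2 = (n : ℝ) * b := by
        rw [f 0]; simp
      have hy1 : |(γ y : E 3) 1| ≤ R := (coord_le_norm _ _).trans (hR _ hzK)
      have hy1' : |y 1| ≤ R := (coord_le_norm _ _).trans (hR _ hyK)
      have hy2 : |(γ y : E 3) 2| ≤ R := (coord_le_norm _ _).trans (hR _ hzK)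
      have hy2' : |y 2| ≤ R := (coord_le_norm _ _).trans (hR _ hyK)
      have hc1 : (γ y : E 3) 1 = y 1 + (m : ℝ) * (a / 2) := by rw [f y]; simp
      have hc2 : (γ y : E 3) 2 = (-1 : ℝ) ^ m * y 2 + (n : ℝ) * b := by rw [f y]; simp
      have habs : |(-1 : ℝ) ^ m| = 1 := by
        rcases Int.even_or_odd m with he | ho
        · rw [he.neg_one_zpow]; simp
        · rw [ho.neg_one_zpow]; simp
      have hmb : |(m : ℝ)| * (a / 2) ≤ 2 * R := by
        have : |(m : ℝ) * (a / 2)| ≤ 2 * R := by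
          have : (m : ℝ) * (a / 2) = (γ y : E 3) 1 - y 1 := by rw [hc1]; ring
          rw [this]
          calc |(γ y : E 3) 1 - y 1| ≤ |(γ y : E 3) 1| + |y 1| := abs_sub _ _
            _ ≤ 2 * R := by linarith
        rwa [abs_mul, abs_of_pos (by linarith : (0:ℝ) < a / 2)] at this
      have hnb : |(n : ℝ)| * b ≤ 2 * R := by
        have : |(n : ℝ) * b| ≤ 2 * R := by
          have heq : (n : ℝ) * b = (γ y : E 3) 2 - (-1 : ℝ) ^ m * y 2 := by rw [hc2]; ring
          rw [heq]
          have : |(-1 : ℝ) ^ m * y 2| = |y 2| := by rw [abs_mul, habs, one_mul]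
          calc |(γ y : E 3) 2 - (-1 : ℝ) ^ m * y 2|
              ≤ |(γ y : E 3) 2| + |(-1 : ℝ) ^ m * y 2| := abs_sub _ _
            _ ≤ 2 * R := by rw [this]; linarith
        rwa [abs_mul, abs_of_pos hb] at this
      have hmM : |m| ≤ M := by
        have h1 : |(m : ℝ)| ≤ 4 * R / a := by
          rw [le_div_iff₀ ha]
          calc |(m : ℝ)| * a = (|(m : ℝ)| * (a / 2)) * 2 := by ring
            _ ≤ (2 * R) * 2 := by nlinarith
            _ = 4 * R := by ring
        have h2 : (4 : ℝ) * R / a ≤ (M : ℝ) := Int.le_ceil _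
        exact_mod_cast h1.trans h2
      have hnN : |n| ≤ N := by
        have h1 : |(n : ℝ)| ≤ 2 * R / b := by
          rw [le_div_iff₀ hb]; exact hnb
        have h2 : (2 : ℝ) * R / b ≤ (N : ℝ) := Int.le_ceil _
        exact_mod_cast h1.trans h2
      refine ⟨(m, n), ?_, ?_⟩
      · simp only [Finset.coe_product, Set.mem_prod, Finset.mem_coe, Finset.mem_Icc]
        rw [abs_le] at hmM hnN
        exact ⟨hmM, hnN⟩
      · simp [h0, h02]
    · rintro γ₁ ⟨hγ₁, -⟩ γ₂ ⟨hγ₂, -⟩ heq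
      obtain ⟨n₁, m₁, f₁⟩ := hmem γ₁ hγ₁
      obtain ⟨n₂, m₂, f₂⟩ := hmem γ₂ hγ₂
      have h11 : (γ₁ 0 : E 3) 1 = (m₁ : ℝ) * (a / 2) := by rw [f₁ 0]; simp
      have h12 : (γ₁ 0 : E 3) 2 = (n₁ : ℝ) * b := by rw [f₁ 0]; simp
      have h21 : (γ₂ 0 : E 3) 1 = (m₂ : ℝ) * (a / 2) := by rw [f₂ 0]; simp
      have h22 : (γ₂ 0 : E 3) 2 = (n₂ : ℝ) * b := by rw [f₂ 0]; simp
      have hm : m₁ = m₂ := by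
        have := congrArg Prod.fst heq
        simp only [h11, h21] at this
        have : (m₁ : ℝ) = m₂ := by
          field_simp at this
          linarith
        exact_mod_cast this
      have hn : n₁ = n₂ := by
        have := congrArg Prod.snd heq
        simp only [h12, h22] at this
        have : (n₁ : ℝ) = n₂ := by
          field_simp at this
          linarith
        exact_mod_cast this
      subst hm; subst hn
      exact IsometryEquiv.ext fun v => by apply WithLp.ofLp_injective; rw [f₁ v, f₂ v]
  · -- orientation preserving
    intro γ hγ
    obtain ⟨n, m, f⟩ := hmem γ hγ
    rcases Int.even_or_odd m with he | ho
    · refine ⟨LinearIsometryEquiv.refl ℝ (E 3), fun x => ?_, ?_⟩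
      · apply WithLp.ofLp_injective; rw [WithLp.ofLp_add, f x, f 0]
        funext i
        fin_cases i <;> simp [he.neg_one_zpow]
      · rw [show ((LinearIsometryEquiv.refl ℝ (E 3)).toLinearEquiv : E 3 →ₗ[ℝ] E 3)
            = LinearMap.id from rfl, LinearMap.det_id]
    · refine ⟨negFlip, fun x => ?_, negFlip_det⟩
      apply WithLp.ofLp_injective; rw [WithLp.ofLp_add, f x, f 0, negFlip_apply]
      funext i
      fin_cases i <;> simp [ho.neg_one_zpow]
end
end

section
/- Let Γ ≤ Isom(ℝ³) be generated by σ₁: (x,y,z) ↦ (−x, y, z+b) and σ₂: (x,y,z) ↦ (x, y + a/2, −z), with a, b > 0. Then Γ acts freely on ℝ³ and contains an element with orientation-reversing linear part. -/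
noncomputable section

/-!
Every element of `⟨σ₁, σ₂⟩` has the form
`(x, y, z) ↦ ((-1)^m x + s, y + n a/2, (-1)^n z + m b)` with `m n : ℤ` and `s : ℝ`:
these maps are closed under composition and inversion, the integer data multiplying as in
`ℤ ⋊ ℤ`, `(m, n) (m', n') = (m + (-1)^n m', n + n')`. A fixed point forces `n = 0` (second
coordinate), then `m = 0` (third coordinate), and then the first coordinate is translated by `s`,
so `s = 0`. The orientation-reversing element is `σ₁`, the reflection in the plane `x = 0`
followed by a translation.
-/

theorem Submodule.det_reflection_orthogonalComplement_singleton {F : Type*}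
    [NormedAddCommGroup F] [InnerProductSpace ℝ F] [FiniteDimensional ℝ F] {v : F} (hv : v ≠ 0) :
    LinearMap.det (ℝ ∙ v)ᗮ.reflection.toLinearMap = -1 := by
  rw [det_reflection, orthogonal_orthogonal, finrank_span_singleton hv, pow_one]

theorem EuclideanSpace.reflection_orthogonalComplement_single_apply {ι : Type*} [Fintype ι]
    [DecidableEq ι] (i j : ι) (x : EuclideanSpace ℝ ι) :
    (ℝ ∙ EuclideanSpace.single i (1 : ℝ))ᗮ.reflection x j = if j = i then -x j else x j := by
  rw [Submodule.reflection_orthogonal_apply, Submodule.reflection_singleton_apply]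
  split_ifs with h
  · subst h
    simp [EuclideanSpace.inner_single_left, two_mul]
  · simp [h]

theorem Int.negOnePow_units_mul (u : ℤˣ) (m : ℤ) : (u * m).negOnePow = m.negOnePow := by
  rcases Int.units_eq_one_or u with rfl | rfl <;> simp [Int.negOnePow_neg]

section KKMotion

variable (b c : ℝ)

def kkMotion (m n : ℤ) (s : ℝ) (v : Fin 3 → ℝ) : Fin 3 → ℝ :=
  ![(m.negOnePow : ℝ) * v 0 + s, v 1 + n * c, (n.negOnePow : ℝ) * v 2 + m * b]

theorem kkMotion_zero (v : Fin 3 → ℝ) : kkMotion b c 0 0 0 v = v := by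
  ext i; fin_cases i <;> simp [kkMotion]

theorem kkMotion_kkMotion (m n m' n' : ℤ) (s s' : ℝ) (v : Fin 3 → ℝ) :
    kkMotion b c m n s (kkMotion b c m' n' s' v) =
      kkMotion b c (m + n.negOnePow * m') (n + n') (m.negOnePow * s' + s) v := by
  ext i
  fin_cases i <;>
    simp only [kkMotion, Fin.zero_eta, Fin.mk_one, Fin.reduceFinMk, Matrix.cons_val_zero,
      Matrix.cons_val_one, Matrix.cons_val, Int.negOnePow_add, Int.negOnePow_units_mul,
      Units.val_mul, Int.cast_mul, Int.cast_add] <;>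
    ring

theorem kkMotion_kkMotion_inv (m n : ℤ) (s : ℝ) (v : Fin 3 → ℝ) :
    kkMotion b c m n s (kkMotion b c (-(n.negOnePow * m)) (-n) (-(m.negOnePow * s)) v) = v := by
  rw [kkMotion_kkMotion, mul_neg, ← mul_assoc, Int.isUnit_mul_self n.negOnePow.isUnit, one_mul,
    add_neg_cancel, add_neg_cancel, mul_neg, ← mul_assoc, ← Int.cast_mul,
    Int.isUnit_mul_self m.negOnePow.isUnit, Int.cast_one, one_mul, neg_add_cancel, kkMotion_zero]

def kkGroup : Subgroup (E 3 ≃ᵢ E 3) where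
  carrier := {γ | ∃ (m n : ℤ) (s : ℝ), ∀ x, (γ x).ofLp = kkMotion b c m n s x.ofLp}
  one_mem' := ⟨0, 0, 0, fun x => (kkMotion_zero b c x).symm⟩
  mul_mem' := by
    rintro γ γ' ⟨m, n, s, hγ⟩ ⟨m', n', s', hγ'⟩
    exact ⟨_, _, _, fun x => by rw [IsometryEquiv.mul_apply, hγ, hγ', kkMotion_kkMotion]⟩
  inv_mem' := by
    rintro γ ⟨m, n, s, hγ⟩
    refine ⟨-(n.negOnePow * m), -n, -(m.negOnePow * s), fun x => ?_⟩
    have hx : γ (WithLp.toLp 2 (kkMotion b c (-(n.negOnePow * m)) (-n) (-(m.negOnePow * s)) x)) = x :=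
      WithLp.ofLp_injective 2 (by rw [hγ, kkMotion_kkMotion_inv])
    exact congrArg WithLp.ofLp (γ.symm_apply_eq.2 hx.symm)

variable {b c}

theorem eq_zero_of_kkMotion_eq_self {m n : ℤ} {s : ℝ} {v : Fin 3 → ℝ} (hb : b ≠ 0) (hc : c ≠ 0)
    (h : kkMotion b c m n s v = v) : m = 0 ∧ n = 0 ∧ s = 0 := by
  have h0 := congrFun h 0
  have h1 := congrFun h 1
  have h2 := congrFun h 2
  simp only [kkMotion, Matrix.cons_val] at h0 h1 h2
  have hn : n = 0 := by simpa [hc] using h1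
  subst hn
  have hm : m = 0 := by simpa [hb] using h2
  subst hm
  simpa using h0

theorem actsFreely_kkGroup (hb : b ≠ 0) (hc : c ≠ 0) : ActsFreely (kkGroup b c) := by
  rintro γ ⟨m, n, s, hγ⟩ ⟨x, hx⟩
  obtain ⟨rfl, rfl, rfl⟩ := eq_zero_of_kkMotion_eq_self hb hc ((hγ x).symm.trans (congrArg _ hx))
  ext1 y
  exact WithLp.ofLp_injective 2 ((hγ y).trans (kkMotion_zero b c _))

end KKMotion

/-- the subgroup of `Isom(ℝ³)` generated by the glide reflections
`σ₁ : (x,y,z) ↦ (-x, y, z + b)` and `σ₂ : (x,y,z) ↦ (x, y + a/2, -z)` acts freely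
on `ℝ³` and contains an element with orientation-reversing linear part. -/
theorem KK_group_free_nonorientable (a b : ℝ) (ha : 0 < a) (hb : 0 < b)
    (σ₁ σ₂ : E 3 ≃ᵢ E 3)
    (hσ₁ : ∀ x : E 3, σ₁ x = ![-(x 0), x 1, x 2 + b])
    (hσ₂ : ∀ x : E 3, σ₂ x = ![x 0, x 1 + a / 2, -(x 2)]) :
    ActsFreely (Subgroup.closure {σ₁, σ₂}) ∧
    (∃ γ ∈ Subgroup.closure {σ₁, σ₂}, ∃ A : E 3 ≃ₗᵢ[ℝ] E 3,
      (∀ x : E 3, γ x = A x + γ 0) ∧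
      LinearMap.det (A.toLinearEquiv : E 3 →ₗ[ℝ] E 3) = -1) := by
  have hΓ : Subgroup.closure {σ₁, σ₂} ≤ kkGroup b (a / 2) := by
    rw [Subgroup.closure_le, Set.insert_subset_iff, Set.singleton_subset_iff]
    constructor
    · exact ⟨1, 0, 0, fun x => by ext i; fin_cases i <;> simp [hσ₁, kkMotion]⟩
    · exact ⟨0, 1, 0, fun x => by ext i; fin_cases i <;> simp [hσ₂, kkMotion]⟩
  refine ⟨fun γ hγ => actsFreely_kkGroup hb.ne' (by positivity) γ (hΓ hγ),
    σ₁, Subgroup.subset_closure (by simp), (ℝ ∙ EuclideanSpace.single 0 1)ᗮ.reflection,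
    fun x => ?_,
    Submodule.det_reflection_orthogonalComplement_singleton (by simp)⟩
  ext i
  fin_cases i <;>
    simp [hσ₁, EuclideanSpace.reflection_orthogonalComplement_single_apply]
end
end

section
/- Let Γ ≤ Isom(ℝ³) be generated by the translations t_{(a,0,0)}, t_{(0,b,0)} and the glide reflection σ: (x,y,z) ↦ (x, y, z + c/2) composed with reflection in the plane x = 0, i.e. σ(x,y,z) = (−x, y, z + c/2) (group of the manifold B₁, a,b,c > 0). Then the translation t_{(a/2,0,0)} normalizes Γ, its square is in Γ, it is not in Γ, and the group generated by Γ and t_{(a/2,0,0)} acts freely on ℝ³. -/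
noncomputable section

/-!
Every element of `⟨Γ, τ⟩` has the form `(x, y, z) ↦ ((-1)^k x + m a/2, y + n b, z + k c/2)` with
`m n k : ℤ`, and such maps form a group. A fixed point forces `k c/2 = 0`, hence `k = 0`, and then the
map is a translation by a fixed vector, hence the identity. The same normal form with `a` in place of
`a/2` contains `Γ`, and `τ` is not of that form since `a/2 ∉ aℤ`. `τ` normalizes `Γ` because it commutes
with the two translations and `τ σ τ⁻¹ = t₁ σ`.
-/

theorem Subgroup.conj_mem_closure_of_forall_conj_mem {G : Type*} [Group G] {S : Set G} {g : G}
    (hS : ∀ s ∈ S, g * s * g⁻¹ ∈ Subgroup.closure S) {δ : G} (hδ : δ ∈ Subgroup.closure S) :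
    g * δ * g⁻¹ ∈ Subgroup.closure S := by
  have h := Subgroup.mem_map_of_mem (MulAut.conj g).toMonoidHom hδ
  rw [MonoidHom.map_closure] at h
  exact (Subgroup.closure_le _).2 (by rintro _ ⟨s, hs, rfl⟩; exact hS s hs) h

theorem ActsFreely.mono {n : ℕ} {Γ Δ : Subgroup (E n ≃ᵢ E n)} (hΔ : ActsFreely Δ) (h : Γ ≤ Δ) :
    ActsFreely Γ :=
  fun γ hγ => hΔ γ (h hγ)

theorem half_ne_intCast_mul {a : ℝ} (ha : a ≠ 0) (m : ℤ) : a / 2 ≠ m * a := by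
  intro h
  have h' : ((2 * m - 1 : ℤ) : ℝ) = 0 := by
    push_cast
    exact (mul_eq_zero.1 (by linear_combination (-2) * h)).resolve_right ha
  have : 2 * m - 1 = 0 := by exact_mod_cast h'
  omega

namespace B1

/-- The maps `σ^k` followed by a translation by `(m s, n b, 0)`; for `s = a` this is `Γ`, for
`s = a / 2` it is `⟨Γ, τ⟩`. -/
def motions (s b c : ℝ) : Subgroup (E 3 ≃ᵢ E 3) where
  carrier := {γ | ∃ m n k : ℤ, ∀ x : E 3,
    γ x = ![(k.negOnePow : ℤ) * x 0 + m * s, x 1 + n * b, x 2 + k * (c / 2)]}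
  one_mem' := ⟨0, 0, 0, fun x => by funext i; fin_cases i <;> simp⟩
  mul_mem' := by
    rintro γ δ ⟨m, n, k, hγ⟩ ⟨m', n', k', hδ⟩
    refine ⟨m + k.negOnePow * m', n + n', k + k', fun x => ?_⟩
    funext i; fin_cases i <;> simp [hγ, hδ, Int.negOnePow_add] <;> ring
  inv_mem' := by
    rintro γ ⟨m, n, k, hγ⟩
    refine ⟨-(k.negOnePow * m), -n, -k, fun x => ?_⟩
    obtain ⟨y, rfl⟩ := γ.surjective x
    have hε : ((k.negOnePow : ℤ) : ℝ) * (k.negOnePow : ℤ) = 1 := by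
      rw [← Int.cast_mul, ← Units.val_mul, Int.units_mul_self, Units.val_one, Int.cast_one]
    funext i; fin_cases i <;> simp [hγ, Int.negOnePow_neg, -Int.coe_negOnePow]
    linear_combination (-y 0) * hε

variable {s b c : ℝ}

theorem motions_intCast_mul_le (q : ℤ) : motions (q * s) b c ≤ motions s b c := by
  rintro γ ⟨m, n, k, hγ⟩
  exact ⟨m * q, n, k, fun x => by rw [hγ]; push_cast; ring_nf⟩

theorem exists_intCast_mul_eq_apply_zero {γ : E 3 ≃ᵢ E 3} (hγ : γ ∈ motions s b c) :
    ∃ m : ℤ, γ 0 0 = m * s := by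
  obtain ⟨m, n, k, hγ⟩ := hγ
  exact ⟨m, by simp [hγ]⟩

theorem actsFreely_motions (hs : s ≠ 0) (hb : b ≠ 0) (hc : c ≠ 0) :
    ActsFreely (motions s b c) := by
  rintro γ ⟨m, n, k, hγ⟩ ⟨x, hx⟩
  have hfix (i : Fin 3) : γ x i = x i := by rw [hx]
  have hk : k = 0 := by simpa [hγ, hc] using hfix 2
  subst hk
  have hm : m = 0 := by simpa [hγ, hs] using hfix 0
  have hn : n = 0 := by simpa [hγ, hb] using hfix 1
  subst hm hn
  ext y i
  fin_cases i <;> simp [hγ]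

theorem closure_le_motions {t₁ t₂ σ : E 3 ≃ᵢ E 3}
    (ht₁ : ∀ x : E 3, t₁ x = ![x 0 + s, x 1, x 2])
    (ht₂ : ∀ x : E 3, t₂ x = ![x 0, x 1 + b, x 2])
    (hσ : ∀ x : E 3, σ x = ![-(x 0), x 1, x 2 + c / 2]) :
    Subgroup.closure {t₁, t₂, σ} ≤ motions s b c := by
  refine (Subgroup.closure_le _).2 ?_
  rintro _ (rfl | rfl | rfl)
  exacts [⟨1, 0, 0, by simp [ht₁]⟩, ⟨0, 1, 0, by simp [ht₂]⟩, ⟨0, 0, 1, by simp [hσ]⟩]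

theorem conj_mem_closure {t₁ t₂ σ τ : E 3 ≃ᵢ E 3}
    (ht₁ : ∀ x : E 3, t₁ x = ![x 0 + s, x 1, x 2])
    (ht₂ : ∀ x : E 3, t₂ x = ![x 0, x 1 + b, x 2])
    (hσ : ∀ x : E 3, σ x = ![-(x 0), x 1, x 2 + c / 2])
    (hτ : ∀ x : E 3, τ x = ![x 0 + s / 2, x 1, x 2])
    {δ : E 3 ≃ᵢ E 3} (hδ : δ ∈ Subgroup.closure {t₁, t₂, σ}) :
    τ * δ * τ⁻¹ ∈ Subgroup.closure {t₁, t₂, σ} := by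
  have hτt₁ : τ * t₁ * τ⁻¹ = t₁ := by
    refine mul_inv_eq_of_eq_mul (IsometryEquiv.ext fun x => ?_)
    ext i; fin_cases i <;> simp [ht₁, hτ]; ring
  have hτt₂ : τ * t₂ * τ⁻¹ = t₂ := by
    refine mul_inv_eq_of_eq_mul (IsometryEquiv.ext fun x => ?_)
    ext i; fin_cases i <;> simp [ht₂, hτ]
  have hτσ : τ * σ * τ⁻¹ = t₁ * σ := by
    refine mul_inv_eq_of_eq_mul (IsometryEquiv.ext fun x => ?_)
    ext i; fin_cases i <;> simp [ht₁, hσ, hτ]; ring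
  refine Subgroup.conj_mem_closure_of_forall_conj_mem ?_ hδ
  rintro _ (rfl | rfl | rfl)
  · rw [hτt₁]; exact Subgroup.subset_closure (by simp)
  · rw [hτt₂]; exact Subgroup.subset_closure (by simp)
  · rw [hτσ]
    exact mul_mem (Subgroup.subset_closure (by simp)) (Subgroup.subset_closure (by simp))

end B1

open B1 in
/-- for the fundamental group `Γ` of the flat manifold `B₁`, generated
by the translations by `(a,0,0)`, `(0,b,0)` and the glide reflection
`σ : (x,y,z) ↦ (-x, y, z + c/2)`, the translation `τ = t_{(a/2,0,0)}` normalizes `Γ`,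
`τ² ∈ Γ`, `τ ∉ Γ`, and the group `⟨Γ, τ⟩` acts freely on `ℝ³`. -/
theorem B1_admissible_translation (a b c : ℝ) (ha : 0 < a) (hb : 0 < b) (hc : 0 < c)
    (t₁ t₂ σ τ : E 3 ≃ᵢ E 3)
    (ht₁ : ∀ x : E 3, t₁ x = ![x 0 + a, x 1, x 2])
    (ht₂ : ∀ x : E 3, t₂ x = ![x 0, x 1 + b, x 2])
    (hσ : ∀ x : E 3, σ x = ![-(x 0), x 1, x 2 + c / 2])
    (hτ : ∀ x : E 3, τ x = ![x 0 + a / 2, x 1, x 2]) :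
    (∀ δ ∈ Subgroup.closure {t₁, t₂, σ}, τ * δ * τ⁻¹ ∈ Subgroup.closure {t₁, t₂, σ}) ∧
    τ ^ 2 ∈ Subgroup.closure {t₁, t₂, σ} ∧
    τ ∉ Subgroup.closure {t₁, t₂, σ} ∧
    ActsFreely (Subgroup.closure
      ((Subgroup.closure {t₁, t₂, σ} : Subgroup (E 3 ≃ᵢ E 3)) ∪ {τ} : Set (E 3 ≃ᵢ E 3))) := by
  have hΓ := closure_le_motions ht₁ ht₂ hσ
  refine ⟨fun δ hδ => conj_mem_closure ht₁ ht₂ hσ hτ hδ, ?_, ?_, ?_⟩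
  · have hτ_sq : τ ^ 2 = t₁ := by
      refine IsometryEquiv.ext fun x => ?_
      ext i; fin_cases i <;> simp [pow_two, ht₁, hτ]; ring
    rw [hτ_sq]
    exact Subgroup.subset_closure (by simp)
  · intro hτΓ
    obtain ⟨m, hm⟩ := exists_intCast_mul_eq_apply_zero (hΓ hτΓ)
    exact half_ne_intCast_mul ha.ne' m (by simpa [hτ] using hm)
  · have hΓ_half : motions a b c ≤ motions (a / 2) b c := by
      simpa [mul_div_cancel₀] using motions_intCast_mul_le (s := a / 2) (b := b) (c := c) 2
    refine (actsFreely_motions (s := a / 2) (by positivity) hb.ne' hc.ne').mono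
      ((Subgroup.closure_le _).2 ?_)
    rintro _ (hγ | rfl)
    exacts [hΓ_half (hΓ hγ), ⟨1, 0, 0, by simp [hτ]⟩]
end
end

section
/- For the 4-dimensional group Γ ≤ Isom(ℝ⁴) generated by γ₁: (x,y,z,t) ↦ (x, y + b/2, −z, t + d/2), γ₂: (x,y,z,t) ↦ (−x, y, z + c/2, −t), γ₃: (x,y,z,t) ↦ (x + a/2, −y, z, −t) (the Hantzsche–Wendt manifold H-W₁, with a,b,c,d > 0 and lattice Λ = ℤ(a,0,0,0)+ℤ(0,b,0,0)+ℤ(0,0,c,0)+ℤ(0,0,0,d)), every translation t_v with 2v ∈ Λ, v ∉ Λ, that normalizes Γ yields a group ⟨Γ, t_v⟩ containing a nontrivial element with a fixed point. -/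
/-!
Every element of `Γ` is a diagonal affine map `x ↦ (±xᵢ + kᵢ pᵢ / 2)ᵢ`, where `p = (a, b, c, d)`,
whose shift `kᵢ` is odd exactly when the axis `π i` is reflected, `π = (1, 2, 0, 2)`. This parity
coupling is stable under composition and inversion, so a translation in `Γ` has all `kᵢ` even and
lies in `Λ`. Hence `2v ∈ Λ` gives `v = (mᵢ pᵢ / 2)ᵢ` with integers `mᵢ`, not all even since `τ ∉ Γ`.
According to which `mᵢ` is odd, one of `γ₂`, `γ₁γ₃`, `γ₁γ₂γ₃`, `γ₁γ₂` has, along every axis it does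
not reflect, a shift congruent to `-vᵢ` modulo `Λ`; composing it with a translation from `v + Λ`
cancels those shifts, leaving a non-trivial isometry with a fixed point.
-/

noncomputable section

variable {n : ℕ}

def negIf {α : Type*} [Neg α] (e : Bool) (x : α) : α := bif e then -x else x

@[simp] theorem negIf_false {α : Type*} [Neg α] (x : α) : negIf false x = x := rfl
@[simp] theorem negIf_true {α : Type*} [Neg α] (x : α) : negIf true x = -x := rfl

@[simp] theorem Int.bodd_negIf (e : Bool) (k : ℤ) : (negIf e k).bodd = k.bodd := by
  cases e <;> simp [Int.bodd_neg]

def IsHalfShift (p : Fin n → ℝ) (g : E n ≃ᵢ E n) (e : Fin n → Bool) (k : Fin n → ℤ) : Prop :=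
  ∀ x i, g x i = negIf (e i) (x i) + k i * (p i / 2)

namespace IsHalfShift

variable {p : Fin n → ℝ} {g g' : E n ≃ᵢ E n} {e e' : Fin n → Bool} {k k' : Fin n → ℤ}

theorem one : IsHalfShift p 1 (fun _ => false) 0 := fun x i => by simp

theorem mul (hg : IsHalfShift p g e k) (hg' : IsHalfShift p g' e' k') :
    IsHalfShift p (g * g') (fun i => xor (e i) (e' i)) (fun i => k i + negIf (e i) (k' i)) := by
  intro x i
  rw [IsometryEquiv.mul_apply, hg, hg']
  cases hi : e i <;> cases hi' : e' i <;> simp [hi, hi'] <;> ring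

theorem inv (hg : IsHalfShift p g e k) : IsHalfShift p g⁻¹ e (fun i => -negIf (e i) (k i)) := by
  intro x i
  set z : E n := WithLp.toLp 2 fun i => negIf (e i) (x i) + (-negIf (e i) (k i) : ℤ) * (p i / 2)
  have hz : g z = x := by
    ext i
    rw [hg]
    cases hi : e i <;> simp [z, hi]
  rw [← hz, IsometryEquiv.inv_apply_self, hz]

theorem translation_iff :
    IsHalfShift p g (fun _ => false) k ↔ ∀ x, g x = x + WithLp.toLp 2 fun i => k i * (p i / 2) := by
  simp only [IsHalfShift, negIf_false, PiLp.ext_iff, PiLp.add_apply]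

theorem eq_of_translation (hg : IsHalfShift p g e k) {u : E n} (hu : ∀ x, g x = x + u) (i : Fin n) :
    e i = false ∧ k i * (p i / 2) = u i := by
  have h₀ := hg 0 i
  have h₁ := hg (EuclideanSpace.single i 1) i
  simp only [hu] at h₀ h₁
  cases hi : e i <;> simp [hi] at h₀ h₁ ⊢ <;> linarith

theorem ne_one (hg : IsHalfShift p g e k) {i : Fin n} (hi : e i = true) : g ≠ 1 := by
  rintro rfl
  have h₀ := hg 0 i
  have h₁ := hg (EuclideanSpace.single i 1) i
  simp only [hi, IsometryEquiv.coe_one, id, PiLp.zero_apply, PiLp.single_apply, if_true,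
    negIf_true, neg_zero, zero_add] at h₀ h₁
  linarith

theorem exists_fixed (hg : IsHalfShift p g e k) (hk : ∀ i, e i = false → k i = 0) :
    ∃ x, g x = x := by
  refine ⟨WithLp.toLp 2 fun i => k i * (p i / 2) / 2, ?_⟩
  ext i
  rw [hg]
  cases hi : e i
  · simp [hk i hi]
  · simp; ring

end IsHalfShift

def translations (C : Subgroup (E n ≃ᵢ E n)) : AddSubgroup (E n) where
  carrier := {u | ∃ T ∈ C, ∀ x, T x = x + u}
  zero_mem' := ⟨1, C.one_mem, fun x => (add_zero x).symm⟩
  add_mem' := by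
    rintro u u' ⟨T, hTC, hT⟩ ⟨T', hT'C, hT'⟩
    exact ⟨T * T', mul_mem hTC hT'C, fun x => by
      rw [IsometryEquiv.mul_apply, hT, hT', add_right_comm, add_assoc]⟩
  neg_mem' := by
    rintro u ⟨T, hTC, hT⟩
    refine ⟨T⁻¹, inv_mem hTC, fun x => ?_⟩
    rw [← IsometryEquiv.inv_apply_self T (x + -u), hT, neg_add_cancel_right]

theorem translations_mono {C D : Subgroup (E n ≃ᵢ E n)} (h : C ≤ D) :
    translations C ≤ translations D :=
  fun _ ⟨T, hTC, hT⟩ => ⟨T, h hTC, hT⟩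

def lattice (p : Fin n → ℝ) : AddSubgroup (E n) :=
  AddSubgroup.closure (Set.range fun i => EuclideanSpace.single i (p i))

theorem mem_lattice_of_even {p : Fin n → ℝ} {u : E n} {r : Fin n → ℤ}
    (hu : ∀ i, u i = r i * (p i / 2)) (hr : ∀ i, Even (r i)) : u ∈ lattice p := by
  have hsum : u = ∑ i, (r i / 2) • EuclideanSpace.single i (p i) := by
    ext j
    have h2 : ((r j / 2 : ℤ) : ℝ) * 2 = r j := by
      exact_mod_cast Int.ediv_two_mul_two_of_even (hr j)
    simp [hu, Pi.single_apply, ← h2]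
    ring
  rw [hsum]
  exact sum_mem fun i _ => zsmul_mem (AddSubgroup.subset_closure (Set.mem_range_self i)) _

theorem lattice_le_translations {p : Fin n → ℝ} {C : Subgroup (E n ≃ᵢ E n)}
    (hT : ∀ i, ∃ T ∈ C, IsHalfShift p T (fun _ => false) (Pi.single i 2)) :
    lattice p ≤ translations C := by
  refine (AddSubgroup.closure_le _).2 ?_
  rintro _ ⟨i, rfl⟩
  obtain ⟨T, hTC, hTi⟩ := hT i
  refine ⟨T, hTC, fun x => ?_⟩
  rw [IsHalfShift.translation_iff.1 hTi]
  congr 1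
  ext j
  by_cases hj : j = i
  · subst hj; simp [two_mul]
  · simp [hj]

def hwSubgroup (p : Fin n → ℝ) (π : Fin n → Fin n) : Subgroup (E n ≃ᵢ E n) where
  carrier := {g | ∃ e k, IsHalfShift p g e k ∧ ∀ i, (k i).bodd = e (π i)}
  one_mem' := ⟨fun _ => false, 0, IsHalfShift.one, fun i => by simp⟩
  mul_mem' := by
    rintro g g' ⟨e, k, hg, hk⟩ ⟨e', k', hg', hk'⟩
    exact ⟨_, _, hg.mul hg', fun i => by simp [Int.bodd_add, hk, hk']⟩
  inv_mem' := by
    rintro g ⟨e, k, hg, hk⟩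
    exact ⟨_, _, hg.inv, fun i => by simp [Int.bodd_neg, hk]⟩

theorem exists_coords_of_mem_hwSubgroup {p : Fin n → ℝ} {π : Fin n → Fin n} {g : E n ≃ᵢ E n}
    (hg : g ∈ hwSubgroup p π) {u : E n} (hu : ∀ x, g x = x + u) :
    ∃ q : Fin n → ℤ, ∀ i, u i = q i * p i := by
  obtain ⟨e, k, hgk, hk⟩ := hg
  refine ⟨fun i => (k i).div2, fun i => ?_⟩
  have hk_even : (k i).bodd = false := (hk i).trans (hgk.eq_of_translation hu (π i)).1
  have hk_two : k i = 2 * (k i).div2 := by simpa [hk_even] using (Int.bodd_add_div2 (k i)).symm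
  rw [← (hgk.eq_of_translation hu i).2, hk_two]
  push_cast
  ring

theorem not_actsFreely_of_even_add {C : Subgroup (E n ≃ᵢ E n)} {p : Fin n → ℝ}
    (hΛ : lattice p ≤ translations C) {v : E n} {m : Fin n → ℤ} (hv : v ∈ translations C)
    (hvm : ∀ i, v i = m i * (p i / 2)) {g : E n ≃ᵢ E n} {e : Fin n → Bool} {k : Fin n → ℤ}
    (hgC : g ∈ C) (hg : IsHalfShift p g e k) (he : ∃ i, e i = true)
    (hkm : ∀ i, e i = false → Even (k i + m i)) : ¬ ActsFreely C := by
  -- Translating by `t` first cancels the shift of `g` along every axis `g` does not reflect,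
  -- and `r ≡ m` mod 2 puts `t` in `v + Λ`.
  set r : Fin n → ℤ := fun i => bif e i then m i else -k i
  set t : E n := WithLp.toLp 2 fun i => r i * (p i / 2)
  have ht : t ∈ translations C := by
    have htv : t - v ∈ lattice p := by
      refine mem_lattice_of_even (r := fun i => r i - m i) (fun i => ?_) fun i => ?_
      · simp [t, hvm]; ring
      · cases hi : e i
        · simpa [r, hi, ← neg_add'] using (hkm i hi).neg
        · simp [r, hi]
    simpa using add_mem hv (hΛ htv)
  obtain ⟨T, hTC, hT⟩ := ht
  have hgT := hg.mul (IsHalfShift.translation_iff.2 hT)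
  simp only [Bool.xor_false] at hgT
  obtain ⟨i, hi⟩ := he
  intro hfree
  refine hgT.ne_one hi (hfree _ (mul_mem hgC hTC) (hgT.exists_fixed fun j hj => ?_))
  simp [r, hj]

namespace HW1

variable {a b c d : ℝ}

theorem isHalfShift_γ₁ {γ : E 4 ≃ᵢ E 4}
    (h : ∀ x : E 4, γ x = ![x 0, x 1 + b / 2, -(x 2), x 3 + d / 2]) :
    IsHalfShift ![a, b, c, d] γ ![false, false, true, false] ![0, 1, 0, 1] :=
  fun x i => by rw [h]; fin_cases i <;> simp

theorem isHalfShift_γ₂ {γ : E 4 ≃ᵢ E 4}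
    (h : ∀ x : E 4, γ x = ![-(x 0), x 1, x 2 + c / 2, -(x 3)]) :
    IsHalfShift ![a, b, c, d] γ ![true, false, false, true] ![0, 0, 1, 0] :=
  fun x i => by rw [h]; fin_cases i <;> simp

theorem isHalfShift_γ₃ {γ : E 4 ≃ᵢ E 4}
    (h : ∀ x : E 4, γ x = ![x 0 + a / 2, -(x 1), x 2, -(x 3)]) :
    IsHalfShift ![a, b, c, d] γ ![false, true, false, true] ![1, 0, 0, 0] :=
  fun x i => by rw [h]; fin_cases i <;> simp

theorem isHalfShift_T₁ {T : E 4 ≃ᵢ E 4} (h : ∀ x : E 4, T x = ![x 0 + a, x 1, x 2, x 3]) :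
    IsHalfShift ![a, b, c, d] T (fun _ => false) (Pi.single 0 2) :=
  fun x i => by rw [h]; fin_cases i <;> simp [two_mul]

theorem isHalfShift_T₂ {T : E 4 ≃ᵢ E 4} (h : ∀ x : E 4, T x = ![x 0, x 1 + b, x 2, x 3]) :
    IsHalfShift ![a, b, c, d] T (fun _ => false) (Pi.single 1 2) :=
  fun x i => by rw [h]; fin_cases i <;> simp [two_mul]

theorem isHalfShift_T₃ {T : E 4 ≃ᵢ E 4} (h : ∀ x : E 4, T x = ![x 0, x 1, x 2 + c, x 3]) :
    IsHalfShift ![a, b, c, d] T (fun _ => false) (Pi.single 2 2) :=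
  fun x i => by rw [h]; fin_cases i <;> simp [two_mul]

theorem isHalfShift_T₄ {T : E 4 ≃ᵢ E 4} (h : ∀ x : E 4, T x = ![x 0, x 1, x 2, x 3 + d]) :
    IsHalfShift ![a, b, c, d] T (fun _ => false) (Pi.single 3 2) :=
  fun x i => by rw [h]; fin_cases i <;> simp [two_mul]

theorem closure_le_hwSubgroup {γ₁ γ₂ γ₃ T₁ T₂ T₃ T₄ : E 4 ≃ᵢ E 4}
    (hγ₁ : ∀ x : E 4, γ₁ x = ![x 0, x 1 + b / 2, -(x 2), x 3 + d / 2])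
    (hγ₂ : ∀ x : E 4, γ₂ x = ![-(x 0), x 1, x 2 + c / 2, -(x 3)])
    (hγ₃ : ∀ x : E 4, γ₃ x = ![x 0 + a / 2, -(x 1), x 2, -(x 3)])
    (hT₁ : ∀ x : E 4, T₁ x = ![x 0 + a, x 1, x 2, x 3])
    (hT₂ : ∀ x : E 4, T₂ x = ![x 0, x 1 + b, x 2, x 3])
    (hT₃ : ∀ x : E 4, T₃ x = ![x 0, x 1, x 2 + c, x 3])
    (hT₄ : ∀ x : E 4, T₄ x = ![x 0, x 1, x 2, x 3 + d]) :
    Subgroup.closure {γ₁, γ₂, γ₃, T₁, T₂, T₃, T₄} ≤ hwSubgroup ![a, b, c, d] ![1, 2, 0, 2] := by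
  rw [Subgroup.closure_le]
  rintro g (rfl | rfl | rfl | rfl | rfl | rfl | rfl)
  exacts [⟨_, _, isHalfShift_γ₁ hγ₁, by decide⟩, ⟨_, _, isHalfShift_γ₂ hγ₂, by decide⟩,
    ⟨_, _, isHalfShift_γ₃ hγ₃, by decide⟩, ⟨_, _, isHalfShift_T₁ hT₁, by decide⟩,
    ⟨_, _, isHalfShift_T₂ hT₂, by decide⟩, ⟨_, _, isHalfShift_T₃ hT₃, by decide⟩,
    ⟨_, _, isHalfShift_T₄ hT₄, by decide⟩]

theorem lattice_le_translations_closure {S : Set (E 4 ≃ᵢ E 4)} {T₁ T₂ T₃ T₄ : E 4 ≃ᵢ E 4}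
    (hS : {T₁, T₂, T₃, T₄} ⊆ S)
    (hT₁ : ∀ x : E 4, T₁ x = ![x 0 + a, x 1, x 2, x 3])
    (hT₂ : ∀ x : E 4, T₂ x = ![x 0, x 1 + b, x 2, x 3])
    (hT₃ : ∀ x : E 4, T₃ x = ![x 0, x 1, x 2 + c, x 3])
    (hT₄ : ∀ x : E 4, T₄ x = ![x 0, x 1, x 2, x 3 + d]) :
    lattice ![a, b, c, d] ≤ translations (Subgroup.closure S) := by
  refine lattice_le_translations fun i => ?_
  fin_cases i
  exacts [⟨T₁, Subgroup.subset_closure (hS (by simp)), isHalfShift_T₁ hT₁⟩,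
    ⟨T₂, Subgroup.subset_closure (hS (by simp)), isHalfShift_T₂ hT₂⟩,
    ⟨T₃, Subgroup.subset_closure (hS (by simp)), isHalfShift_T₃ hT₃⟩,
    ⟨T₄, Subgroup.subset_closure (hS (by simp)), isHalfShift_T₄ hT₄⟩]

theorem not_actsFreely {C : Subgroup (E 4 ≃ᵢ E 4)} {γ₁ γ₂ γ₃ : E 4 ≃ᵢ E 4}
    (h₁ : γ₁ ∈ C) (h₂ : γ₂ ∈ C) (h₃ : γ₃ ∈ C)
    (hγ₁ : ∀ x : E 4, γ₁ x = ![x 0, x 1 + b / 2, -(x 2), x 3 + d / 2])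
    (hγ₂ : ∀ x : E 4, γ₂ x = ![-(x 0), x 1, x 2 + c / 2, -(x 3)])
    (hγ₃ : ∀ x : E 4, γ₃ x = ![x 0 + a / 2, -(x 1), x 2, -(x 3)])
    (hΛ : lattice ![a, b, c, d] ≤ translations C) {v : E 4} {m : Fin 4 → ℤ}
    (hv : v ∈ translations C) (hvm : ∀ i, v i = m i * (![a, b, c, d] i / 2))
    (hm : ¬ ∀ i, Even (m i)) : ¬ ActsFreely C := by
  rcases Int.even_or_odd (m 1) with e₁ | o₁
  · rcases Int.even_or_odd (m 3) with e₃ | o₃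
    · rcases Int.even_or_odd (m 0) with e₀ | o₀
      · rcases Int.even_or_odd (m 2) with e₂ | o₂
        · exact absurd (fun i => by fin_cases i <;> assumption) hm
        · exact not_actsFreely_of_even_add hΛ hv hvm h₂ (isHalfShift_γ₂ hγ₂) ⟨0, rfl⟩
            fun i hi => by fin_cases i <;> simp_all [parity_simps]
      · exact not_actsFreely_of_even_add hΛ hv hvm (mul_mem h₁ h₃)
          ((isHalfShift_γ₁ hγ₁).mul (isHalfShift_γ₃ hγ₃)) ⟨1, rfl⟩
          fun i hi => by fin_cases i <;> simp_all [parity_simps]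
    · exact not_actsFreely_of_even_add hΛ hv hvm (mul_mem h₁ (mul_mem h₂ h₃))
        ((isHalfShift_γ₁ hγ₁).mul ((isHalfShift_γ₂ hγ₂).mul (isHalfShift_γ₃ hγ₃))) ⟨0, rfl⟩
        fun i hi => by fin_cases i <;> simp_all [parity_simps]
  · exact not_actsFreely_of_even_add hΛ hv hvm (mul_mem h₁ h₂)
      ((isHalfShift_γ₁ hγ₁).mul (isHalfShift_γ₂ hγ₂)) ⟨0, rfl⟩
      fun i hi => by fin_cases i <;> simp_all [parity_simps]

end HW1

theorem HW1_no_admissible_translation_general (a b c d : ℝ)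
    (γ₁ γ₂ γ₃ T₁ T₂ T₃ T₄ : E 4 ≃ᵢ E 4)
    (hγ₁ : ∀ x : E 4, γ₁ x = ![x 0, x 1 + b / 2, -(x 2), x 3 + d / 2])
    (hγ₂ : ∀ x : E 4, γ₂ x = ![-(x 0), x 1, x 2 + c / 2, -(x 3)])
    (hγ₃ : ∀ x : E 4, γ₃ x = ![x 0 + a / 2, -(x 1), x 2, -(x 3)])
    (hT₁ : ∀ x : E 4, T₁ x = ![x 0 + a, x 1, x 2, x 3])
    (hT₂ : ∀ x : E 4, T₂ x = ![x 0, x 1 + b, x 2, x 3])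
    (hT₃ : ∀ x : E 4, T₃ x = ![x 0, x 1, x 2 + c, x 3])
    (hT₄ : ∀ x : E 4, T₄ x = ![x 0, x 1, x 2, x 3 + d])
    (v : E 4) (τ : E 4 ≃ᵢ E 4) (hτ : ∀ x : E 4, τ x = x + v)
    (h2v : ∃ s ∈ Subgroup.closure {γ₁, γ₂, γ₃, T₁, T₂, T₃, T₄},
      ∀ x : E 4, s x = x + (2 : ℝ) • v)
    (hv : τ ∉ Subgroup.closure {γ₁, γ₂, γ₃, T₁, T₂, T₃, T₄}) :
    ∃ γ ∈ Subgroup.closure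
      ((Subgroup.closure {γ₁, γ₂, γ₃, T₁, T₂, T₃, T₄} : Subgroup (E 4 ≃ᵢ E 4)) ∪ {τ} :
        Set (E 4 ≃ᵢ E 4)),
      γ ≠ 1 ∧ ∃ x : E 4, γ x = x := by
  set Γ := Subgroup.closure {γ₁, γ₂, γ₃, T₁, T₂, T₃, T₄}
  set C := Subgroup.closure ((Γ : Set (E 4 ≃ᵢ E 4)) ∪ {τ})
  have hΓC : Γ ≤ C := fun g hg => Subgroup.subset_closure (Or.inl hg)
  have hΛ : lattice ![a, b, c, d] ≤ translations Γ :=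
    HW1.lattice_le_translations_closure (by simp [Set.insert_subset_iff]) hT₁ hT₂ hT₃ hT₄
  obtain ⟨s, hsΓ, hs⟩ := h2v
  obtain ⟨m, hm⟩ := exists_coords_of_mem_hwSubgroup
    (HW1.closure_le_hwSubgroup hγ₁ hγ₂ hγ₃ hT₁ hT₂ hT₃ hT₄ hsΓ) hs
  have hvm : ∀ i, v i = m i * (![a, b, c, d] i / 2) := fun i => by
    linarith [hm i, show ((2 : ℝ) • v) i = 2 * v i from rfl]
  by_cases heven : ∀ i, Even (m i)
  · obtain ⟨T, hTΓ, hT⟩ := hΛ (mem_lattice_of_even hvm heven)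
    exact absurd ((IsometryEquiv.ext fun x => (hT x).trans (hτ x).symm) ▸ hTΓ) hv
  · have hfree := HW1.not_actsFreely (hΓC (Subgroup.subset_closure (by simp)))
      (hΓC (Subgroup.subset_closure (by simp))) (hΓC (Subgroup.subset_closure (by simp)))
      hγ₁ hγ₂ hγ₃ (hΛ.trans (translations_mono hΓC)) ⟨τ, Subgroup.subset_closure (Or.inr rfl), hτ⟩
      hvm heven
    simp only [ActsFreely, not_forall] at hfree
    obtain ⟨γ, hγC, hfix, hne⟩ := hfree
    exact ⟨γ, hγC, hne, hfix⟩

/-- for the 4-dimensional Hantzsche–Wendt group `Γ` of `H-W₁`,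
generated by `γ₁ : (x,y,z,t) ↦ (x, y+b/2, -z, t+d/2)`,
`γ₂ : (x,y,z,t) ↦ (-x, y, z+c/2, -t)`, `γ₃ : (x,y,z,t) ↦ (x+a/2, -y, z, -t)`
together with the lattice `Λ = ℤ(a,0,0,0) + ℤ(0,b,0,0) + ℤ(0,0,c,0) + ℤ(0,0,0,d)`,
every translation `t_v` with `2v ∈ Λ`, `v ∉ Λ` normalizing `Γ` yields a group
`⟨Γ, t_v⟩` containing a nontrivial element with a fixed point. -/
theorem HW1_no_admissible_translation (a b c d : ℝ)
    (ha : 0 < a) (hb : 0 < b) (hc : 0 < c) (hd : 0 < d)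
    (γ₁ γ₂ γ₃ T₁ T₂ T₃ T₄ : E 4 ≃ᵢ E 4)
    (hγ₁ : ∀ x : E 4, γ₁ x = ![x 0, x 1 + b / 2, -(x 2), x 3 + d / 2])
    (hγ₂ : ∀ x : E 4, γ₂ x = ![-(x 0), x 1, x 2 + c / 2, -(x 3)])
    (hγ₃ : ∀ x : E 4, γ₃ x = ![x 0 + a / 2, -(x 1), x 2, -(x 3)])
    (hT₁ : ∀ x : E 4, T₁ x = ![x 0 + a, x 1, x 2, x 3])
    (hT₂ : ∀ x : E 4, T₂ x = ![x 0, x 1 + b, x 2, x 3])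
    (hT₃ : ∀ x : E 4, T₃ x = ![x 0, x 1, x 2 + c, x 3])
    (hT₄ : ∀ x : E 4, T₄ x = ![x 0, x 1, x 2, x 3 + d])
    (v : E 4) (τ : E 4 ≃ᵢ E 4) (hτ : ∀ x : E 4, τ x = x + v)
    (h2v : ∃ s ∈ Subgroup.closure {γ₁, γ₂, γ₃, T₁, T₂, T₃, T₄},
      ∀ x : E 4, s x = x + (2 : ℝ) • v)
    (hv : τ ∉ Subgroup.closure {γ₁, γ₂, γ₃, T₁, T₂, T₃, T₄})
    (hnorm : ∀ δ ∈ Subgroup.closure {γ₁, γ₂, γ₃, T₁, T₂, T₃, T₄},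
      τ * δ * τ⁻¹ ∈ Subgroup.closure {γ₁, γ₂, γ₃, T₁, T₂, T₃, T₄}) :
    ∃ γ ∈ Subgroup.closure
      ((Subgroup.closure {γ₁, γ₂, γ₃, T₁, T₂, T₃, T₄} : Subgroup (E 4 ≃ᵢ E 4)) ∪ {τ} :
        Set (E 4 ≃ᵢ E 4)),
      γ ≠ 1 ∧ ∃ x : E 4, γ x = x :=
  HW1_no_admissible_translation_general a b c d γ₁ γ₂ γ₃ T₁ T₂ T₃ T₄ hγ₁ hγ₂ hγ₃ hT₁ hT₂ hT₃ hT₄ v τ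
    hτ h2v hv
end
end
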